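/- Let Γ be a Chern connection of L and Γ̃ a Chern connection of L̃ in their charts, and let γ : I → Ω be a smooth curve on an interval I such that (γ(t), γ̇(t)) ∈ A and γ̇(t) is horizontal for every t ∈ I (a horizontal admissible curve); then (pr(γ(t)), pr(γ̇(t))) ∈ Ã for all t, and γ satisfies the geodesic equation γ̈(t) + Γ_{(γ(t),γ̇(t))}(γ̇(t), γ̇(t)) = 0 for all t if and only if the projected curve γ̃ := pr∘γ satisfies the geodesic equation γ̃″(t) + Γ̃_{(γ̃(t),γ̃′(t))}(γ̃′(t), γ̃′(t)) = 0 for all t. (A horizontal curve is a geodesic of the total space if and only if it is the horizontal lift of a geodesic of the base.) -/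

import Mathlib

open Filter Topology

/-- A pseudo-Finsler metric in a chart: an open set `Ω ⊆ E`, an open set
`A ⊆ Ω × (E ∖ {0})` with conic fibers, a smooth positively `2`-homogeneous `L` on `A`
and its fundamental tensor `g`, given by the second fiber derivative of `L`, required
to be symmetric and nondegenerate at every point of `A`. -/
structure PseudoFinslerChart (E : Type*) [NormedAddCommGroup E] [NormedSpace ℝ E] where
  Ω : Set E
  A : Set (E × E)
  L : E × E → ℝ
  g : E × E → E →ₗ[ℝ] E →ₗ[ℝ] ℝ
  Ω_open : IsOpen Ω
  A_open : IsOpen A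
  A_sub : ∀ pv ∈ A, pv.1 ∈ Ω ∧ pv.2 ≠ 0
  A_cone : ∀ pv ∈ A, ∀ c : ℝ, 0 < c → (pv.1, c • pv.2) ∈ A
  L_smooth : ContDiffOn ℝ (⊤ : ℕ∞) L A
  L_homog : ∀ pv ∈ A, ∀ c : ℝ, 0 < c → L (pv.1, c • pv.2) = c ^ 2 * L pv
  g_def : ∀ pv ∈ A, ∀ e h : E,
    g pv e h = (1 / 2) * deriv (fun s : ℝ =>
      deriv (fun t : ℝ => L (pv.1, pv.2 + s • e + t • h)) 0) 0
  g_symm : ∀ pv ∈ A, ∀ e h : E, g pv e h = g pv h e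
  g_nondeg : ∀ pv ∈ A, ∀ e : E, (∀ h : E, g pv e h = 0) → e = 0

namespace PseudoFinslerChart

variable {E : Type*} [NormedAddCommGroup E] [NormedSpace ℝ E] (F : PseudoFinslerChart E)

lemma mem_nhds {pv : E × E} (hpv : pv ∈ F.A) : F.A ∈ 𝓝 pv := F.A_open.mem_nhds hpv

lemma diffAt_L {pv : E × E} (hpv : pv ∈ F.A) : DifferentiableAt ℝ F.L pv :=
  (F.L_smooth.contDiffAt (F.mem_nhds hpv)).differentiableAt (by simp)

lemma contDiffAt_fderivL {pv : E × E} (hpv : pv ∈ F.A) :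
    ContDiffAt ℝ (⊤ : ℕ∞) (fderiv ℝ F.L) pv :=
  (F.L_smooth.fderiv_of_isOpen F.A_open (by simp)).contDiffAt (F.mem_nhds hpv)

lemma diffAt_phi {pv : E × E} (hpv : pv ∈ F.A) (b : E) :
    DifferentiableAt ℝ (fun u => fderiv ℝ F.L u (0, b)) pv :=
  ((F.contDiffAt_fderivL hpv).differentiableAt (by simp)).clm_apply (differentiableAt_const _)

/-- derivative along a fiber line -/
lemma hasDerivAt_L_line {p w : E} (hpw : (p, w) ∈ F.A) (h : E) :
    HasDerivAt (fun t : ℝ => F.L (p, w + t • h)) (fderiv ℝ F.L (p, w) (0, h)) 0 := by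
  have hline : HasDerivAt (fun t : ℝ => ((p, w + t • h) : E × E)) ((0 : E), h) 0 := by
    have h2 : HasDerivAt (fun t : ℝ => w + t • h) h 0 := by
      simpa using ((hasDerivAt_id (0:ℝ)).smul_const h).const_add w
    exact (hasDerivAt_const (0:ℝ) p).prodMk h2
  have := ((F.diffAt_L (by simpa using hpw)).hasFDerivAt.comp_hasDerivAt 0 hline)
  rw [zero_smul, add_zero] at this
  exact this

lemma g_fderiv {pv : E × E} (hpv : pv ∈ F.A) (e h : E) :
    F.g pv e h = (1 / 2) * fderiv ℝ (fun u => fderiv ℝ F.L u (0, h)) pv (0, e) := by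
  obtain ⟨p, v⟩ := pv
  rw [F.g_def _ hpv]
  congr 1
  have hev : (fun s : ℝ => deriv (fun t : ℝ => F.L (p, v + s • e + t • h)) 0)
      =ᶠ[𝓝 0] (fun s : ℝ => fderiv ℝ F.L (p, v + s • e) (0, h)) := by
    have hc : ContinuousAt (fun s : ℝ => ((p, v + s • e) : E × E)) 0 := by fun_prop
    have : ∀ᶠ s : ℝ in 𝓝 0, ((p, v + s • e) : E × E) ∈ F.A := by
      have := hc.preimage_mem_nhds (F.mem_nhds (by simpa using hpv))
      exact this
    filter_upwards [this] with s hs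
    exact (F.hasDerivAt_L_line hs h).deriv
  rw [hev.deriv_eq]
  have hline : HasDerivAt (fun s : ℝ => ((p, v + s • e) : E × E)) ((0 : E), e) 0 := by
    have h2 : HasDerivAt (fun s : ℝ => v + s • e) e 0 := by
      simpa using ((hasDerivAt_id (0:ℝ)).smul_const e).const_add v
    exact (hasDerivAt_const (0:ℝ) p).prodMk h2
  have hφ : DifferentiableAt ℝ (fun u => fderiv ℝ F.L u (0, h)) (p, v) := F.diffAt_phi hpv h
  have hφ' : HasFDerivAt (fun u => fderiv ℝ F.L u (0, h))
      (fderiv ℝ (fun u => fderiv ℝ F.L u (0, h)) (p, v)) ((p, v + (0:ℝ) • e)) := by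
    simpa using hφ.hasFDerivAt
  have := hφ'.comp_hasDerivAt 0 hline
  exact this.deriv

lemma fderiv_partial1 {G : Type*} [NormedAddCommGroup G] [NormedSpace ℝ G]
    {f : E × E → G} {p v : E} (hf : DifferentiableAt ℝ f (p, v)) (x : E) :
    fderiv ℝ (fun q => f (q, v)) p x = fderiv ℝ f (p, v) (x, 0) := by
  have hin : HasFDerivAt (fun q : E => ((q, v) : E × E))
      ((ContinuousLinearMap.id ℝ E).prod 0) p :=
    (hasFDerivAt_id p).prodMk (hasFDerivAt_const v p)
  have := (hf.hasFDerivAt.comp p hin).fderiv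
  simp only [Function.comp_def] at this
  rw [this]; simp

lemma fderiv_partial2 {G : Type*} [NormedAddCommGroup G] [NormedSpace ℝ G]
    {f : E × E → G} {p v : E} (hf : DifferentiableAt ℝ f (p, v)) (x : E) :
    fderiv ℝ (fun w => f (p, w)) v x = fderiv ℝ f (p, v) (0, x) := by
  have hin : HasFDerivAt (fun w : E => ((p, w) : E × E))
      ((0 : E →L[ℝ] E).prod (ContinuousLinearMap.id ℝ E)) v :=
    (hasFDerivAt_const p v).prodMk (hasFDerivAt_id v)
  have := (hf.hasFDerivAt.comp v hin).fderiv
  simp only [Function.comp_def] at this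
  rw [this]; simp

lemma fderivL_fiber_homog {pv : E × E} (hpv : pv ∈ F.A) {c : ℝ} (hc : 0 < c) (h : E) :
    fderiv ℝ F.L (pv.1, c • pv.2) (0, h) = c * fderiv ℝ F.L pv (0, h) := by
  obtain ⟨p, v⟩ := pv
  dsimp only
  have hmemev : ∀ᶠ w : E in 𝓝 v, ((p, w) : E × E) ∈ F.A := by
    have hc' : ContinuousAt (fun w : E => ((p, w) : E × E)) v := by fun_prop
    exact hc'.preimage_mem_nhds (F.mem_nhds (by simpa using hpv))
  have hev : (fun w : E => F.L (p, c • w)) =ᶠ[𝓝 v] (fun w : E => c ^ 2 * F.L (p, w)) := by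
    filter_upwards [hmemev] with w hw
    exact F.L_homog _ hw c hc
  have hcv : ((p, c • v) : E × E) ∈ F.A := F.A_cone _ (by simpa using hpv) c hc
  have hin : HasFDerivAt (fun w : E => ((p, c • w) : E × E))
      ((0 : E →L[ℝ] E).prod (c • ContinuousLinearMap.id ℝ E)) v :=
    (hasFDerivAt_const p v).prodMk ((hasFDerivAt_id v).const_smul c)
  have hL1 : fderiv ℝ (fun w : E => F.L (p, c • w)) v h
      = fderiv ℝ F.L (p, c • v) (0, c • h) := by
    have := ((F.diffAt_L hcv).hasFDerivAt.comp v hin).fderiv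
    simp only [Function.comp_def] at this
    rw [this]; simp
  have hL2 : fderiv ℝ (fun w : E => c ^ 2 * F.L (p, w)) v h
      = c ^ 2 * fderiv ℝ F.L (p, v) (0, h) := by
    have hdiff : DifferentiableAt ℝ (fun w : E => F.L (p, w)) v :=
      (F.diffAt_L (by simpa using hpv)).comp v (by fun_prop)
    rw [fderiv_const_mul hdiff]
    simp [fderiv_partial2 (F.diffAt_L (by simpa using hpv)) h]
  have heq : fderiv ℝ F.L (p, c • v) (0, c • h) = c ^ 2 * fderiv ℝ F.L (p, v) (0, h) := by
    rw [← hL1, ← hL2, hev.fderiv_eq]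
  have hsm : fderiv ℝ F.L (p, c • v) (0, c • h) = c * fderiv ℝ F.L (p, c • v) (0, h) := by
    have : ((0 : E), c • h) = c • ((0 : E), h) := by simp [Prod.smul_def]
    rw [this, map_smul]; simp
  rw [hsm] at heq
  exact mul_left_cancel₀ (ne_of_gt hc) (by rw [heq]; ring)

lemma hasDerivAt_scale {p v : E} (f : E × E → ℝ) (hf : DifferentiableAt ℝ f (p, v)) :
    HasDerivAt (fun c : ℝ => f (p, c • v)) (fderiv ℝ f (p, v) (0, v)) 1 := by
  have hline : HasDerivAt (fun c : ℝ => ((p, c • v) : E × E)) ((0 : E), v) 1 := by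
    have h2 : HasDerivAt (fun c : ℝ => c • v) v 1 := by
      simpa using (hasDerivAt_id (1:ℝ)).smul_const v
    exact (hasDerivAt_const (1:ℝ) p).prodMk h2
  have hf' : HasFDerivAt f (fderiv ℝ f (p, v)) ((p, (1:ℝ) • v)) := by
    simpa using hf.hasFDerivAt
  exact hf'.comp_hasDerivAt 1 hline

lemma euler_L {pv : E × E} (hpv : pv ∈ F.A) :
    fderiv ℝ F.L pv (0, pv.2) = 2 * F.L pv := by
  obtain ⟨p, v⟩ := pv
  have hev : (fun c : ℝ => F.L (p, c • v)) =ᶠ[𝓝 1] (fun c : ℝ => c ^ 2 * F.L (p, v)) := by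
    filter_upwards [eventually_gt_nhds (by norm_num : (0:ℝ) < 1)] with c hc
    exact F.L_homog _ hpv c hc
  have h1 : HasDerivAt (fun c : ℝ => F.L (p, c • v)) (fderiv ℝ F.L (p, v) (0, v)) 1 :=
    hasDerivAt_scale F.L (F.diffAt_L hpv)
  have h2 : HasDerivAt (fun c : ℝ => c ^ 2 * F.L (p, v)) (2 * F.L (p, v)) 1 := by
    simpa using (hasDerivAt_pow 2 (1:ℝ)).mul_const (F.L (p, v))
  exact (h1.congr_of_eventuallyEq hev.symm).unique h2

lemma euler_phi {pv : E × E} (hpv : pv ∈ F.A) (h : E) :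
    fderiv ℝ (fun u => fderiv ℝ F.L u (0, h)) pv (0, pv.2) = fderiv ℝ F.L pv (0, h) := by
  obtain ⟨p, v⟩ := pv
  have hev : (fun c : ℝ => fderiv ℝ F.L (p, c • v) (0, h))
      =ᶠ[𝓝 1] (fun c : ℝ => c * fderiv ℝ F.L (p, v) (0, h)) := by
    filter_upwards [eventually_gt_nhds (by norm_num : (0:ℝ) < 1)] with c hc
    exact F.fderivL_fiber_homog hpv hc h
  have h1 : HasDerivAt (fun c : ℝ => fderiv ℝ F.L (p, c • v) (0, h))
      (fderiv ℝ (fun u => fderiv ℝ F.L u (0, h)) (p, v) (0, v)) 1 :=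
    hasDerivAt_scale _ (F.diffAt_phi hpv h)
  have h2 : HasDerivAt (fun c : ℝ => c * fderiv ℝ F.L (p, v) (0, h))
      (fderiv ℝ F.L (p, v) (0, h)) 1 := by
    simpa using (hasDerivAt_id (1:ℝ)).mul_const (fderiv ℝ F.L (p, v) (0, h))
  exact (h1.congr_of_eventuallyEq hev.symm).unique h2

lemma fderivL_eq_g {pv : E × E} (hpv : pv ∈ F.A) (h : E) :
    fderiv ℝ F.L pv (0, h) = 2 * F.g pv pv.2 h := by
  have := F.g_fderiv hpv pv.2 h
  rw [F.euler_phi hpv h] at this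
  linarith

lemma g_scale {pv : E × E} (hpv : pv ∈ F.A) {c : ℝ} (hc : 0 < c) (e h : E) :
    F.g (pv.1, c • pv.2) e h = F.g pv e h := by
  obtain ⟨p, v⟩ := pv
  dsimp only at *
  have hcv : ((p, c • v) : E × E) ∈ F.A := F.A_cone _ hpv c hc
  rw [F.g_fderiv hcv e h, F.g_fderiv hpv e h]
  have hmemev : ∀ᶠ w : E in 𝓝 v, ((p, w) : E × E) ∈ F.A := by
    have hc' : ContinuousAt (fun w : E => ((p, w) : E × E)) v := by fun_prop
    exact hc'.preimage_mem_nhds (F.mem_nhds hpv)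
  have hev : (fun w : E => fderiv ℝ F.L (p, c • w) (0, h))
      =ᶠ[𝓝 v] (fun w : E => c * fderiv ℝ F.L (p, w) (0, h)) := by
    filter_upwards [hmemev] with w hw
    exact F.fderivL_fiber_homog hw hc h
  have hin : HasFDerivAt (fun w : E => ((p, c • w) : E × E))
      ((0 : E →L[ℝ] E).prod (c • ContinuousLinearMap.id ℝ E)) v :=
    (hasFDerivAt_const p v).prodMk ((hasFDerivAt_id v).const_smul c)
  have hL1 : fderiv ℝ (fun w : E => fderiv ℝ F.L (p, c • w) (0, h)) v e
      = c * fderiv ℝ (fun u => fderiv ℝ F.L u (0, h)) (p, c • v) (0, e) := by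
    have := ((F.diffAt_phi hcv h).hasFDerivAt.comp v hin).fderiv
    simp only [Function.comp_def] at this
    rw [this]
    have hsm : ((0 : E), c • e) = c • ((0 : E), e) := by simp [Prod.smul_def]
    simp only [ContinuousLinearMap.comp_apply, ContinuousLinearMap.prod_apply,
      ContinuousLinearMap.zero_apply, ContinuousLinearMap.smul_apply,
      ContinuousLinearMap.coe_id', id_eq]
    rw [hsm, map_smul]; simp
  have hL2 : fderiv ℝ (fun w : E => c * fderiv ℝ F.L (p, w) (0, h)) v e
      = c * fderiv ℝ (fun u => fderiv ℝ F.L u (0, h)) (p, v) (0, e) := by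
    have hdiff : DifferentiableAt ℝ (fun w : E => fderiv ℝ F.L (p, w) (0, h)) v :=
      (F.diffAt_phi hpv h).comp v (by fun_prop)
    rw [fderiv_const_mul hdiff]
    simp [fderiv_partial2 (F.diffAt_phi hpv h) e]
  have heq := hev.fderiv_eq (𝕜 := ℝ)
  have : fderiv ℝ (fun w : E => fderiv ℝ F.L (p, c • w) (0, h)) v e
      = fderiv ℝ (fun w : E => c * fderiv ℝ F.L (p, w) (0, h)) v e := by rw [heq]
  rw [hL1, hL2] at this
  have := mul_left_cancel₀ (ne_of_gt hc) this
  linarith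

lemma L_eq_g {pv : E × E} (hpv : pv ∈ F.A) : F.L pv = F.g pv pv.2 pv.2 := by
  have h1 := F.euler_L hpv
  have h2 := F.fderivL_eq_g hpv pv.2
  linarith

end PseudoFinslerChart

/-- The Cartan tensor of a pseudo-Finsler metric in a chart. -/
noncomputable def PseudoFinslerChart.Cartan {E : Type*} [NormedAddCommGroup E]
    [NormedSpace ℝ E] (F : PseudoFinslerChart E) (pv : E × E) (b e h : E) : ℝ :=
  (1 / 4) * deriv (fun r : ℝ => deriv (fun s : ℝ =>
    deriv (fun t : ℝ => F.L (pv.1, pv.2 + r • b + s • e + t • h)) 0) 0) 0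

namespace PseudoFinslerChart

variable {E : Type*} [NormedAddCommGroup E] [NormedSpace ℝ E] (F : PseudoFinslerChart E)

lemma cartan_v {pv : E × E} (hpv : pv ∈ F.A) (e h : E) :
    F.Cartan pv pv.2 e h = 0 := by
  obtain ⟨p, v⟩ := pv
  rw [PseudoFinslerChart.Cartan]
  have hev : (fun r : ℝ => deriv (fun s : ℝ =>
        deriv (fun t : ℝ => F.L ((p, v).1, (p, v).2 + r • (p, v).2 + s • e + t • h)) 0) 0)
      =ᶠ[𝓝 0] (fun _ : ℝ => 2 * F.g (p, v) e h) := by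
    filter_upwards [eventually_gt_nhds (by norm_num : (-1 : ℝ) < 0)] with r hr
    have hr1 : (0 : ℝ) < 1 + r := by linarith
    have hmem : ((p, (1 + r) • v) : E × E) ∈ F.A := F.A_cone _ hpv _ hr1
    have hdef := F.g_def _ hmem e h
    have hfun : (fun s : ℝ => deriv (fun t : ℝ =>
          F.L ((p, v).1, (p, v).2 + r • (p, v).2 + s • e + t • h)) 0)
        = (fun s : ℝ => deriv (fun t : ℝ =>
          F.L ((p, (1 + r) • v).1, (p, (1 + r) • v).2 + s • e + t • h)) 0) := by
      funext s
      congr 1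
      funext t
      congr 2
      dsimp only
      rw [add_smul, one_smul]
    rw [hfun]
    rw [F.g_scale hpv hr1 e h] at hdef
    dsimp only at hdef ⊢
    linarith
  rw [hev.deriv_eq]
  simp

lemma key_identity
    (Γ : E × E → E →ₗ[ℝ] E →ₗ[ℝ] E)
    (hΓsymm : ∀ pv ∈ F.A, ∀ e h : E, Γ pv e h = Γ pv h e)
    (hΓcompat : ∀ pv ∈ F.A, ∀ e h b : E,
      fderiv ℝ (fun q => F.g (q, pv.2) h b) pv.1 e
        = F.g pv (Γ pv e h) b + F.g pv h (Γ pv e b)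
          + 2 * F.Cartan pv h b (Γ pv e pv.2))
    {pv : E × E} (hpv : pv ∈ F.A) (a b : E) :
    fderiv ℝ (fun u => fderiv ℝ F.L u (0, b)) pv (pv.2, a)
      = fderiv ℝ F.L pv (b, 0) + 2 * F.g pv (a + Γ pv pv.2 pv.2) b := by
  have hmemev : ∀ᶠ q : E in 𝓝 pv.1, ((q, pv.2) : E × E) ∈ F.A := by
    have hc' : ContinuousAt (fun q : E => ((q, pv.2) : E × E)) pv.1 := by fun_prop
    have := hc'.preimage_mem_nhds (F.mem_nhds (by simpa using hpv))
    exact this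
  have hφdiff : DifferentiableAt ℝ (fun q : E => fderiv ℝ F.L (q, pv.2) (0, b)) pv.1 :=
    (F.diffAt_phi hpv b).comp (f := fun q : E => ((q, pv.2) : E × E)) pv.1 (by fun_prop)
  -- step: fderiv of partial g equals half of fderiv of phi
  have hgev : (fun q : E => F.g (q, pv.2) pv.2 b)
      =ᶠ[𝓝 pv.1] (fun q : E => (1/2) * fderiv ℝ F.L (q, pv.2) (0, b)) := by
    filter_upwards [hmemev] with q hq
    have := F.fderivL_eq_g hq b
    dsimp only at this ⊢
    linarith
  have hg1 : fderiv ℝ (fun q : E => F.g (q, pv.2) pv.2 b) pv.1 pv.2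
      = (1/2) * fderiv ℝ (fun q : E => fderiv ℝ F.L (q, pv.2) (0, b)) pv.1 pv.2 := by
    rw [hgev.fderiv_eq, fderiv_const_mul hφdiff]
    simp
  have hcompat1 := hΓcompat pv hpv pv.2 pv.2 b
  rw [F.cartan_v hpv] at hcompat1
  have hphi_part : fderiv ℝ (fun u => fderiv ℝ F.L u (0, b)) pv (pv.2, (0 : E))
      = 2 * (F.g pv (Γ pv pv.2 pv.2) b + F.g pv pv.2 (Γ pv pv.2 b)) := by
    have h1 : fderiv ℝ (fun u => fderiv ℝ F.L u (0, b)) pv (pv.2, (0 : E))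
        = fderiv ℝ (fun q : E => fderiv ℝ F.L (q, pv.2) (0, b)) pv.1 pv.2 := by
      rw [fderiv_partial1 (F.diffAt_phi hpv b) pv.2]
    rw [h1]
    rw [hg1] at hcompat1
    linarith
  -- step: fderiv L pv (b, 0)
  have hLev : (fun q : E => F.L (q, pv.2))
      =ᶠ[𝓝 pv.1] (fun q : E => F.g (q, pv.2) pv.2 b * 0 + F.g (q, pv.2) pv.2 pv.2) := by
    filter_upwards [hmemev] with q hq
    rw [F.L_eq_g hq]; ring
  have hcompat2 := hΓcompat pv hpv b pv.2 pv.2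
  rw [F.cartan_v hpv] at hcompat2
  have hLpart : fderiv ℝ F.L pv (b, 0) = 2 * F.g pv pv.2 (Γ pv pv.2 b) := by
    have h1 : fderiv ℝ F.L pv (b, 0)
        = fderiv ℝ (fun q : E => F.L (q, pv.2)) pv.1 b := by
      rw [fderiv_partial1 (F.diffAt_L hpv) b]
    have h2 : (fun q : E => F.L (q, pv.2))
        =ᶠ[𝓝 pv.1] (fun q : E => F.g (q, pv.2) pv.2 pv.2) := by
      filter_upwards [hmemev] with q hq
      exact F.L_eq_g hq
    rw [h1, h2.fderiv_eq, hcompat2]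
    rw [F.g_symm _ hpv (Γ pv b pv.2) pv.2, hΓsymm _ hpv b pv.2]
    ring
  -- combine
  have hsplit : ((pv.2, a) : E × E) = (pv.2, (0:E)) + ((0:E), a) := by simp
  rw [hsplit, map_add, hphi_part]
  have hg2 : fderiv ℝ (fun u => fderiv ℝ F.L u (0, b)) pv ((0:E), a)
      = 2 * F.g pv a b := by
    have := F.g_fderiv hpv a b
    linarith
  rw [hg2, hLpart]
  simp only [map_add, LinearMap.add_apply]
  ring

lemma curve_deriv {I : Set ℝ} (hI : IsOpen I) {γ : ℝ → E}
    (hγ : ContDiffOn ℝ (⊤ : ℕ∞) γ I)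
    (hγA : ∀ t ∈ I, (γ t, deriv γ t) ∈ F.A) {t : ℝ} (ht : t ∈ I) (b : E) :
    deriv (fun t' => fderiv ℝ F.L (γ t', deriv γ t') (0, b)) t
      = fderiv ℝ (fun u => fderiv ℝ F.L u (0, b)) (γ t, deriv γ t)
          (deriv γ t, deriv (deriv γ) t) := by
  have hd1 : HasDerivAt γ (deriv γ t) t :=
    ((hγ.differentiableOn (by simp)).differentiableAt (hI.mem_nhds ht)).hasDerivAt
  have hdγ : ContDiffOn ℝ (⊤ : ℕ∞) (deriv γ) I :=
    hγ.deriv_of_isOpen hI (le_of_eq rfl)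
  have hd2 : HasDerivAt (deriv γ) (deriv (deriv γ) t) t :=
    ((hdγ.differentiableOn (by simp)).differentiableAt (hI.mem_nhds ht)).hasDerivAt
  have hcurve : HasDerivAt (fun t' => ((γ t', deriv γ t') : E × E))
      ((deriv γ t, deriv (deriv γ) t) : E × E) t := hd1.prodMk hd2
  exact ((F.diffAt_phi (hγA t ht) b).hasFDerivAt.comp_hasDerivAt t hcurve).deriv

end PseudoFinslerChart

section Submersion

open PseudoFinslerChart ContinuousLinearMap

variable {m r : ℕ}

local notation "Em" => EuclideanSpace ℝ (Fin m)
local notation "Er" => EuclideanSpace ℝ (Fin r)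

lemma euclid_decomp (x : EuclideanSpace ℝ (Fin r)) :
    x = ∑ i, x i • EuclideanSpace.single i (1 : ℝ) := by
  have := ((EuclideanSpace.basisFun (Fin r) ℝ).toBasis.sum_repr x).symm
  simpa [EuclideanSpace.basisFun_repr, EuclideanSpace.basisFun_apply] using this

/-- vertical vanishing of a linear functional implies vanishing of `g` against
vertical vectors -/
lemma vertical_zero (F : PseudoFinslerChart (Em × Er))
    {pv : (Em × Er) × (Em × Er)} (hpv : pv ∈ F.A)
    (h0 : ∀ i : Fin r, fderiv ℝ F.L pv ((0 : Em × Er),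
      ((0 : Em), EuclideanSpace.single i (1:ℝ))) = 0)
    (w : Em × Er) (hw : w.1 = 0) : F.g pv pv.2 w = 0 := by
  set T := (fderiv ℝ F.L pv).comp ((ContinuousLinearMap.inr ℝ (Em × Er) (Em × Er)).comp
      (ContinuousLinearMap.inr ℝ Em Er)) with hTdef
  have hTi : ∀ i : Fin r, T (EuclideanSpace.single i (1:ℝ)) = 0 := by
    intro i
    simpa [hTdef] using h0 i
  have hTw : T w.2 = 0 := by
    rw [euclid_decomp w.2, map_sum]
    simp [hTi]
  have hw' : w = ((0 : Em), w.2) := by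
    rw [← hw]
  have h2 := F.fderivL_eq_g hpv w
  have h3 : fderiv ℝ F.L pv ((0 : Em × Er), w) = T w.2 := by
    rw [hw']
    simp [hTdef]
  rw [h3, hTw] at h2
  linarith

set_option maxHeartbeats 2000000 in
lemma submersion_fderiv (F : PseudoFinslerChart (Em × Er)) (Ft : PseudoFinslerChart Em)
    (hVnd : ∀ pv ∈ F.A, ∀ w : Em × Er, w.1 = 0 →
      (∀ u : Em × Er, u.1 = 0 → F.g pv w u = 0) → w = 0)
    (hsub : ∀ pv ∈ F.A, (∀ w : Em × Er, w.1 = 0 → F.g pv pv.2 w = 0) →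
      (pv.1.1, pv.2.1) ∈ Ft.A ∧ F.L pv = Ft.L (pv.1.1, pv.2.1))
    {pv : (Em × Er) × (Em × Er)} (hpv : pv ∈ F.A)
    (hor : ∀ w : Em × Er, w.1 = 0 → F.g pv pv.2 w = 0)
    (b c : Em × Er) :
    fderiv ℝ F.L pv (b, c) = fderiv ℝ Ft.L (pv.1.1, pv.2.1) (b.1, c.1) := by
  obtain ⟨p, v⟩ := pv
  dsimp only at *
  set ι : Er →L[ℝ] Em × Er := ContinuousLinearMap.inr ℝ Em Er with hιdef
  set J : Er →L[ℝ] (Em × Er) × (Em × Er) :=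
    (ContinuousLinearMap.inr ℝ (Em × Er) (Em × Er)).comp ι with hJdef
  set A' : ℝ × Er →L[ℝ] (Em × Er) × (Em × Er) :=
    ((ContinuousLinearMap.fst ℝ ℝ Er).smulRight b).prod
      (((ContinuousLinearMap.fst ℝ ℝ Er).smulRight c) +
        ι.comp (ContinuousLinearMap.snd ℝ ℝ Er)) with hA'def
  set α : ℝ × Er → (Em × Er) × (Em × Er) := fun z => (p, v) + A' z with hαdef
  have hA'app : ∀ z : ℝ × Er, A' z = (z.1 • b, z.1 • c + ι z.2) := fun z => rfl
  have hα00 : α (0, 0) = (p, v) := by simp [hαdef, hA'app]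
  set Fh : ℝ × Er → Fin r → ℝ := fun z i =>
    fderiv ℝ F.L (α z) (J (EuclideanSpace.single i (1:ℝ))) with hFhdef
  set H : ℝ × Er → ℝ × (Fin r → ℝ) := fun z => (z.1, Fh z) with hHdef
  have hαsm : ContDiff ℝ (⊤ : ℕ∞) α := contDiff_const.add A'.contDiff
  have hαf : ∀ z : ℝ × Er, HasFDerivAt α A' z := fun z => A'.hasFDerivAt.const_add (p, v)
  have hφdiff : ∀ h : Em × Er, DifferentiableAt ℝ
      (fun u => fderiv ℝ F.L u ((0 : Em × Er), h)) (p, v) := fun h => F.diffAt_phi hpv h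
  have hJapp : ∀ w : Er, J w = ((0 : Em × Er), ι w) := fun w => rfl
  have hcomp_i : ∀ i : Fin r, DifferentiableAt ℝ (fun z : ℝ × Er => Fh z i) (0, 0) := by
    intro i
    have h1 : DifferentiableAt ℝ
        (fun u => fderiv ℝ F.L u (J (EuclideanSpace.single i (1:ℝ)))) (α (0, 0)) := by
      rw [hα00]
      exact hφdiff _
    exact h1.comp (0, 0) (hαf (0, 0)).differentiableAt
  have hFhsm : ContDiffAt ℝ (⊤ : ℕ∞) Fh (0, 0) := by
    rw [contDiffAt_pi]
    intro i
    have h1 : ContDiffAt ℝ (⊤ : ℕ∞)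
        (fun u => fderiv ℝ F.L u (J (EuclideanSpace.single i (1:ℝ)))) (α (0, 0)) := by
      rw [hα00]
      exact (F.contDiffAt_fderivL hpv).clm_apply contDiffAt_const
    exact h1.comp (0, 0) hαsm.contDiffAt
  set DF : (ℝ × Er) →L[ℝ] (Fin r → ℝ) := fderiv ℝ Fh (0, 0) with hDFdef
  set D : (ℝ × Er) →L[ℝ] ℝ × (Fin r → ℝ) := (ContinuousLinearMap.fst ℝ ℝ Er).prod DF
    with hDdef
  have hHstrict : HasStrictFDerivAt H D (0, 0) := by
    have h1 : HasStrictFDerivAt Fh DF (0, 0) :=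
      hFhsm.hasStrictFDerivAt (by simp)
    have h2 : HasStrictFDerivAt (fun z : ℝ × Er => z.1)
        (ContinuousLinearMap.fst ℝ ℝ Er) (0, 0) :=
      (ContinuousLinearMap.fst ℝ ℝ Er).hasStrictFDerivAt
    exact h2.prodMk h1
  -- compute fderiv of the components of Fh
  have hchain : ∀ i : Fin r, fderiv ℝ (fun z : ℝ × Er => Fh z i) (0, 0)
      = (fderiv ℝ (fun u => fderiv ℝ F.L u
          (J (EuclideanSpace.single i (1:ℝ)))) (p, v)).comp A' := by
    intro i
    have houter : HasFDerivAt (fun u => fderiv ℝ F.L u (J (EuclideanSpace.single i (1:ℝ))))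
        (fderiv ℝ (fun u => fderiv ℝ F.L u (J (EuclideanSpace.single i (1:ℝ)))) (p, v))
        (α (0, 0)) := by
      rw [hα00]
      exact (hφdiff _).hasFDerivAt
    have := (houter.comp (0, 0) (hαf (0, 0))).fderiv
    simp only [Function.comp_def] at this
    exact this
  have hDFk : ∀ k : Er, ∀ i : Fin r, DF ((0 : ℝ), k) i
      = 2 * F.g (p, v) (ι k) (ι (EuclideanSpace.single i (1:ℝ))) := by
    intro k i
    have h1 : DF ((0 : ℝ), k) i = fderiv ℝ (fun z : ℝ × Er => Fh z i) (0, 0) ((0 : ℝ), k) := by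
      rw [hDFdef, fderiv_pi hcomp_i]
      rfl
    rw [h1, hchain i]
    have hA'k : A' ((0 : ℝ), k) = ((0 : Em × Er), ι k) := by
      rw [hA'app]
      simp
    rw [ContinuousLinearMap.comp_apply, hA'k]
    have := F.g_fderiv hpv (ι k) (ι (EuclideanSpace.single i (1:ℝ)))
    rw [hJapp]
    linarith
  -- injectivity of D
  have hinj : Function.Injective ⇑D := by
    rw [injective_iff_map_eq_zero]
    intro z hz
    have hz1 : z.1 = 0 := congrArg Prod.fst hz
    have hz2 : DF z = 0 := congrArg Prod.snd hz
    have hzeq : ((0 : ℝ), z.2) = z := by rw [← hz1]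
    have hgi : ∀ i : Fin r, F.g (p, v) (ι z.2) (ι (EuclideanSpace.single i (1:ℝ))) = 0 := by
      intro i
      have := hDFk z.2 i
      rw [hzeq, hz2] at this
      simpa using this.symm
    have hgall : ∀ u : Em × Er, u.1 = 0 → F.g (p, v) (ι z.2) u = 0 := by
      intro u hu
      have hu' : u = ι u.2 := by
        rw [hιdef]
        ext
        · simpa using hu.symm ▸ rfl
        · rfl
      rw [hu', euclid_decomp u.2, map_sum, map_sum]
      refine Finset.sum_eq_zero ?_
      intro i _
      rw [map_smul, map_smul, hgi i, smul_zero]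
    have hz20 : ι z.2 = 0 := hVnd (p, v) hpv (ι z.2) (by simp [hιdef]) hgall
    have : z.2 = 0 := by
      have := congrArg Prod.snd hz20
      simpa [hιdef] using this
    rw [← hzeq, this]
    rfl
  have hrank : Module.finrank ℝ (ℝ × Er) = Module.finrank ℝ (ℝ × (Fin r → ℝ)) := by
    simp
  have hsurj : Function.Surjective ⇑D :=
    (LinearMap.injective_iff_surjective_of_finrank_eq_finrank hrank).mp hinj
  set e : (ℝ × Er) ≃L[ℝ] ℝ × (Fin r → ℝ) :=
    (LinearEquiv.ofBijective (↑D : (ℝ × Er) →ₗ[ℝ] ℝ × (Fin r → ℝ))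
      ⟨hinj, hsurj⟩).toContinuousLinearEquiv with hedef
  have hecoe : (e : (ℝ × Er) →L[ℝ] ℝ × (Fin r → ℝ)) = D := by
    apply ContinuousLinearMap.ext
    intro z
    rfl
  have hstrict' : HasStrictFDerivAt H (e : (ℝ × Er) →L[ℝ] ℝ × (Fin r → ℝ)) (0, 0) := by
    rw [hecoe]; exact hHstrict
  have hH00 : H (0, 0) = ((0 : ℝ), (0 : Fin r → ℝ)) := by
    rw [hHdef]
    dsimp only
    congr 1
    funext i
    rw [hFhdef]
    dsimp only
    rw [hα00, hJapp]
    have := F.fderivL_eq_g hpv (ι (EuclideanSpace.single i (1:ℝ)))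
    rw [this, hor (ι (EuclideanSpace.single i (1:ℝ))) (by simp [hιdef])]
    simp
  set inv : ℝ × (Fin r → ℝ) → ℝ × Er := hstrict'.localInverse H e (0, 0) with hinvdef
  have hinvdiff : DifferentiableAt ℝ inv ((0 : ℝ), (0 : Fin r → ℝ)) := by
    have := hstrict'.to_localInverse
    rw [hH00] at this
    exact this.differentiableAt
  have hleft : inv ((0 : ℝ), (0 : Fin r → ℝ)) = ((0 : ℝ), (0 : Er)) := by
    have := hstrict'.localInverse_apply_image
    rw [hH00] at this
    exact this
  have hright : ∀ᶠ y in 𝓝 ((0 : ℝ), (0 : Fin r → ℝ)), H (inv y) = y := by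
    have := hstrict'.eventually_right_inverse
    rwa [hH00] at this
  set ψ : ℝ → ℝ × Er := fun t => inv (t, (0 : Fin r → ℝ)) with hψdef
  have hψdiff : DifferentiableAt ℝ ψ 0 := by
    have hin : DifferentiableAt ℝ (fun t : ℝ => ((t, (0 : Fin r → ℝ)))) 0 :=
      differentiableAt_id.prodMk (differentiableAt_const _)
    have := DifferentiableAt.comp (𝕜 := ℝ) (g := inv)
      (f := fun t : ℝ => ((t, (0 : Fin r → ℝ)))) 0 hinvdiff hin
    simpa [Function.comp_def] using this
  have hψ0 : ψ 0 = ((0 : ℝ), (0 : Er)) := hleft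
  have hψright : ∀ᶠ t in 𝓝 (0 : ℝ), H (ψ t) = (t, (0 : Fin r → ℝ)) := by
    have hcont : Filter.Tendsto (fun t : ℝ => ((t, (0 : Fin r → ℝ))))
        (𝓝 0) (𝓝 ((0 : ℝ), (0 : Fin r → ℝ))) :=
      Continuous.tendsto (by fun_prop) 0
    exact hcont.eventually hright
  set C : ℝ → (Em × Er) × (Em × Er) := fun t => α (ψ t) with hCdef
  have hC0 : C 0 = (p, v) := by rw [hCdef]; dsimp only; rw [hψ0, hα00]
  have hCcont : ContinuousAt C 0 :=
    (hαsm.continuous.continuousAt).comp hψdiff.continuousAt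
  have hCA : ∀ᶠ t in 𝓝 (0 : ℝ), C t ∈ F.A := by
    have h1 : F.A ∈ 𝓝 (C 0) := by rw [hC0]; exact F.mem_nhds hpv
    exact eventually_mem_set.mpr (hCcont.preimage_mem_nhds h1)
  have hChor : ∀ᶠ t in 𝓝 (0 : ℝ), ∀ w : Em × Er, w.1 = 0 →
      F.g (C t) (C t).2 w = 0 := by
    filter_upwards [hψright, hCA] with t h3 h1
    have hFh0 : Fh (ψ t) = 0 := by
      have := congrArg Prod.snd h3
      simpa [hHdef] using this
    intro w hw
    refine vertical_zero F h1 ?_ w hw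
    intro i
    have := congrFun hFh0 i
    exact this
  have hψfst : ∀ᶠ t in 𝓝 (0 : ℝ), (ψ t).1 = t := by
    filter_upwards [hψright] with t h3
    exact congrArg Prod.fst h3
  have hFtA : ((p.1, v.1) : Em × Em) ∈ Ft.A := (hsub (p, v) hpv hor).1
  have hLev : ∀ᶠ t in 𝓝 (0 : ℝ),
      F.L (C t) = Ft.L (p.1 + t • b.1, v.1 + t • c.1) := by
    filter_upwards [hCA, hChor, hψfst] with t h1 h2 ht1
    have hmain := (hsub _ h1 h2).2
    rw [hmain]
    congr 1
    have hct : C t = (p + t • b, v + t • c + ι (ψ t).2) := by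
      rw [hCdef]
      dsimp only
      rw [hαdef]
      dsimp only
      rw [hA'app, ht1, Prod.mk_add_mk, add_assoc]
    rw [hct]
    simp [Prod.ext_iff, hιdef]
  -- derivative of ψ
  have hψd : HasDerivAt ψ (deriv ψ 0) 0 := hψdiff.hasDerivAt
  have hd1 : (deriv ψ 0).1 = 1 := by
    have hfst : HasDerivAt (fun t => (ψ t).1) (deriv ψ 0).1 0 := by
      have := (ContinuousLinearMap.fst ℝ ℝ Er).hasFDerivAt.comp_hasDerivAt 0 hψd
      exact this
    have hev : (fun t => (ψ t).1) =ᶠ[𝓝 (0:ℝ)] id := by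
      filter_upwards [hψfst] with t h
      exact h
    exact (hfst.congr_of_eventuallyEq hev.symm).unique (hasDerivAt_id 0)
  have hCd : HasDerivAt C (A' (deriv ψ 0)) 0 := (hαf (ψ 0)).comp_hasDerivAt 0 hψd
  have hA'd : A' (deriv ψ 0) = (b, c + ι (deriv ψ 0).2) := by
    rw [hA'app, hd1]
    simp
  rw [hA'd] at hCd
  have hLdiff : HasFDerivAt F.L (fderiv ℝ F.L (p, v)) (C 0) := by
    rw [hC0]
    exact (F.diffAt_L hpv).hasFDerivAt
  have hLC : HasDerivAt (fun t => F.L (C t))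
      (fderiv ℝ F.L (p, v) (b, c + ι (deriv ψ 0).2)) 0 :=
    hLdiff.comp_hasDerivAt 0 hCd
  have hRline : HasDerivAt (fun t : ℝ => ((p.1 + t • b.1, v.1 + t • c.1) : Em × Em))
      ((b.1, c.1) : Em × Em) 0 := by
    have h1 : HasDerivAt (fun t : ℝ => p.1 + t • b.1) b.1 0 := by
      simpa using ((hasDerivAt_id (0:ℝ)).smul_const b.1).const_add p.1
    have h2 : HasDerivAt (fun t : ℝ => v.1 + t • c.1) c.1 0 := by
      simpa using ((hasDerivAt_id (0:ℝ)).smul_const c.1).const_add v.1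
    exact h1.prodMk h2
  have hRC : HasDerivAt (fun t : ℝ => Ft.L (p.1 + t • b.1, v.1 + t • c.1))
      (fderiv ℝ Ft.L (p.1, v.1) ((b.1, c.1) : Em × Em)) 0 := by
    have hd : HasFDerivAt Ft.L (fderiv ℝ Ft.L (p.1, v.1))
        ((p.1 + (0:ℝ) • b.1, v.1 + (0:ℝ) • c.1) : Em × Em) := by
      simpa using (Ft.diffAt_L hFtA).hasFDerivAt
    exact hd.comp_hasDerivAt 0 hRline
  have hfinal : fderiv ℝ F.L (p, v) (b, c + ι (deriv ψ 0).2)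
      = fderiv ℝ Ft.L (p.1, v.1) ((b.1, c.1) : Em × Em) := by
    have hLev2 : (fun t : ℝ => Ft.L (p.1 + t • b.1, v.1 + t • c.1))
        =ᶠ[𝓝 (0:ℝ)] (fun t => F.L (C t)) := by
      filter_upwards [hLev] with t h
      exact h.symm
    exact (hLC.congr_of_eventuallyEq hLev2).unique hRC
  have hsplit : ((b, c + ι (deriv ψ 0).2) : (Em × Er) × (Em × Er))
      = (b, c) + ((0 : Em × Er), ι (deriv ψ 0).2) := by
    simp [Prod.ext_iff]
  rw [hsplit, map_add] at hfinal
  have hvert : fderiv ℝ F.L (p, v) ((0 : Em × Er), ι (deriv ψ 0).2) = 0 := by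
    rw [F.fderivL_eq_g hpv, hor (ι (deriv ψ 0).2) (by simp [hιdef])]
    ring
  rw [hvert, add_zero] at hfinal
  exact hfinal

end Submersion

namespace PseudoFinslerChart

variable {E : Type*} [NormedAddCommGroup E] [NormedSpace ℝ E] (F : PseudoFinslerChart E)

lemma key_identity'
    (Γ : E × E → E →ₗ[ℝ] E →ₗ[ℝ] E)
    (hΓsymm : ∀ pv ∈ F.A, ∀ e h : E, Γ pv e h = Γ pv h e)
    (hΓcompat : ∀ pv ∈ F.A, ∀ e h b : E,
      fderiv ℝ (fun q => F.g (q, pv.2) h b) pv.1 e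
        = F.g pv (Γ pv e h) b + F.g pv h (Γ pv e b)
          + 2 * F.Cartan pv h b (Γ pv e pv.2))
    {p v : E} (hpv : (p, v) ∈ F.A) (a b : E) :
    fderiv ℝ (fun u => fderiv ℝ F.L u (0, b)) (p, v) (v, a)
      = fderiv ℝ F.L (p, v) (b, 0) + 2 * F.g (p, v) (a + Γ (p, v) v v) b :=
  F.key_identity Γ hΓsymm hΓcompat hpv a b

lemma geodesic_g
    (Γ : E × E → E →ₗ[ℝ] E →ₗ[ℝ] E)
    (hΓsymm : ∀ pv ∈ F.A, ∀ e h : E, Γ pv e h = Γ pv h e)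
    (hΓcompat : ∀ pv ∈ F.A, ∀ e h b : E,
      fderiv ℝ (fun q => F.g (q, pv.2) h b) pv.1 e
        = F.g pv (Γ pv e h) b + F.g pv h (Γ pv e b)
          + 2 * F.Cartan pv h b (Γ pv e pv.2))
    {I : Set ℝ} (hI : IsOpen I) {γ : ℝ → E}
    (hγ : ContDiffOn ℝ (⊤ : ℕ∞) γ I)
    (hγA : ∀ t ∈ I, (γ t, deriv γ t) ∈ F.A) {t : ℝ} (ht : t ∈ I) (b : E) :
    2 * F.g (γ t, deriv γ t)
        (deriv (deriv γ) t + Γ (γ t, deriv γ t) (deriv γ t) (deriv γ t)) b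
      = deriv (fun t' => fderiv ℝ F.L (γ t', deriv γ t') (0, b)) t
        - fderiv ℝ F.L (γ t, deriv γ t) (b, 0) := by
  rw [F.curve_deriv hI hγ hγA ht b,
    F.key_identity' Γ hΓsymm hΓcompat (hγA t ht) (deriv (deriv γ) t) b]
  ring

end PseudoFinslerChart

/-- The fiber derivative `(∂̇𝒳)_{(p,v)}(h) = d/dt|₀ 𝒳(p, v + t h)` of an anisotropic
vector field. -/
noncomputable def fiberDeriv {E : Type*} [NormedAddCommGroup E] [NormedSpace ℝ E]
    (𝒳 : E × E → E) (pv : E × E) (h : E) : E :=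
  deriv (fun t : ℝ => 𝒳 (pv.1, pv.2 + t • h)) 0

/-- The covariant derivative `∇^{(p,v)}_e 𝒳` of an anisotropic vector field with respect
to an anisotropic connection `Γ`. -/
noncomputable def covDeriv {E : Type*} [NormedAddCommGroup E] [NormedSpace ℝ E]
    (Γ : E × E → E →ₗ[ℝ] E →ₗ[ℝ] E) (𝒳 : E × E → E) (pv : E × E) (e : E) : E :=
  fderiv ℝ (fun q => 𝒳 (q, pv.2)) pv.1 e + Γ pv e (𝒳 pv)
    - fiberDeriv 𝒳 pv (Γ pv e pv.2)

/-- The vertical derivative `P_{(p,v)}(e,h,b) = d/dt|₀ Γ_{(p,v+tb)}(e,h)` of an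
anisotropic connection. -/
noncomputable def vertDeriv {E : Type*} [NormedAddCommGroup E] [NormedSpace ℝ E]
    (Γ : E × E → E →ₗ[ℝ] E →ₗ[ℝ] E) (pv : E × E) (e h b : E) : E :=
  deriv (fun t : ℝ => Γ (pv.1, pv.2 + t • b) e h) 0

set_option maxHeartbeats 1000000 in
/-- for a pseudo-Finsler submersion in an adapted chart with Chern
connections `Γ` (total space) and `Γt` (base), a horizontal admissible curve `γ`
projects into `Ã`, and `γ` satisfies the geodesic equation of the total space if and
only if its projection satisfies the geodesic equation of the base: a horizontal curve
is a geodesic iff it is the horizontal lift of a geodesic. -/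
theorem stmt13 (m r : ℕ)
    (F : PseudoFinslerChart (EuclideanSpace ℝ (Fin m) × EuclideanSpace ℝ (Fin r)))
    (Ft : PseudoFinslerChart (EuclideanSpace ℝ (Fin m)))
    (hΩ : ∀ p ∈ F.Ω, p.1 ∈ Ft.Ω)
    (hVnd : ∀ pv ∈ F.A, ∀ w : EuclideanSpace ℝ (Fin m) × EuclideanSpace ℝ (Fin r),
      w.1 = 0 → (∀ u : EuclideanSpace ℝ (Fin m) × EuclideanSpace ℝ (Fin r),
        u.1 = 0 → F.g pv w u = 0) → w = 0)
    (hsub : ∀ pv ∈ F.A,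
      (∀ w : EuclideanSpace ℝ (Fin m) × EuclideanSpace ℝ (Fin r),
        w.1 = 0 → F.g pv pv.2 w = 0) →
      (pv.1.1, pv.2.1) ∈ Ft.A ∧ F.L pv = Ft.L (pv.1.1, pv.2.1))
    (Γ : (EuclideanSpace ℝ (Fin m) × EuclideanSpace ℝ (Fin r)) ×
        (EuclideanSpace ℝ (Fin m) × EuclideanSpace ℝ (Fin r)) →
      (EuclideanSpace ℝ (Fin m) × EuclideanSpace ℝ (Fin r)) →ₗ[ℝ]
        (EuclideanSpace ℝ (Fin m) × EuclideanSpace ℝ (Fin r)) →ₗ[ℝ]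
          (EuclideanSpace ℝ (Fin m) × EuclideanSpace ℝ (Fin r)))
    (hΓsmooth : ∀ e h : EuclideanSpace ℝ (Fin m) × EuclideanSpace ℝ (Fin r),
      ContDiffOn ℝ (⊤ : ℕ∞) (fun pv => Γ pv e h) F.A)
    (hΓsymm : ∀ pv ∈ F.A, ∀ e h : EuclideanSpace ℝ (Fin m) × EuclideanSpace ℝ (Fin r),
      Γ pv e h = Γ pv h e)
    (hΓcompat : ∀ pv ∈ F.A, ∀ e h b : EuclideanSpace ℝ (Fin m) × EuclideanSpace ℝ (Fin r),
      fderiv ℝ (fun q => F.g (q, pv.2) h b) pv.1 e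
        = F.g pv (Γ pv e h) b + F.g pv h (Γ pv e b)
          + 2 * F.Cartan pv h b (Γ pv e pv.2))
    (Γt : EuclideanSpace ℝ (Fin m) × EuclideanSpace ℝ (Fin m) →
      EuclideanSpace ℝ (Fin m) →ₗ[ℝ] EuclideanSpace ℝ (Fin m) →ₗ[ℝ] EuclideanSpace ℝ (Fin m))
    (hΓtsmooth : ∀ e h : EuclideanSpace ℝ (Fin m),
      ContDiffOn ℝ (⊤ : ℕ∞) (fun pv => Γt pv e h) Ft.A)
    (hΓtsymm : ∀ pv ∈ Ft.A, ∀ e h : EuclideanSpace ℝ (Fin m), Γt pv e h = Γt pv h e)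
    (hΓtcompat : ∀ pv ∈ Ft.A, ∀ e h b : EuclideanSpace ℝ (Fin m),
      fderiv ℝ (fun q => Ft.g (q, pv.2) h b) pv.1 e
        = Ft.g pv (Γt pv e h) b + Ft.g pv h (Γt pv e b)
          + 2 * Ft.Cartan pv h b (Γt pv e pv.2))
    (I : Set ℝ) (hIopen : IsOpen I) (hIconn : I.OrdConnected)
    (γ : ℝ → EuclideanSpace ℝ (Fin m) × EuclideanSpace ℝ (Fin r))
    (hγ : ContDiffOn ℝ (⊤ : ℕ∞) γ I)
    (hγΩ : ∀ t ∈ I, γ t ∈ F.Ω)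
    (hγA : ∀ t ∈ I, (γ t, deriv γ t) ∈ F.A)
    (hγhor : ∀ t ∈ I, ∀ w : EuclideanSpace ℝ (Fin m) × EuclideanSpace ℝ (Fin r),
      w.1 = 0 → F.g (γ t, deriv γ t) (deriv γ t) w = 0) :
    (∀ t ∈ I, ((γ t).1, (deriv γ t).1) ∈ Ft.A) ∧
    ((∀ t ∈ I, deriv (deriv γ) t + Γ (γ t, deriv γ t) (deriv γ t) (deriv γ t) = 0) ↔
      (∀ t ∈ I,
        deriv (deriv (fun s => (γ s).1)) t
          + Γt ((γ t).1, deriv (fun s => (γ s).1) t)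
              (deriv (fun s => (γ s).1) t) (deriv (fun s => (γ s).1) t) = 0)) := by
  have part1 : ∀ t ∈ I, ((γ t).1, (deriv γ t).1) ∈ Ft.A := fun t ht =>
    (hsub _ (hγA t ht) (hγhor t ht)).1
  refine ⟨part1, ?_⟩
  set δ : ℝ → EuclideanSpace ℝ (Fin m) := fun s => (γ s).1 with hδdef
  have hδsm : ContDiffOn ℝ (⊤ : ℕ∞) δ I := contDiff_fst.comp_contDiffOn hγ
  have hγd : ∀ t ∈ I, HasDerivAt γ (deriv γ t) t := fun t ht =>
    ((hγ.differentiableOn (by simp)).differentiableAt (hIopen.mem_nhds ht)).hasDerivAt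
  have hδd : ∀ t ∈ I, deriv δ t = (deriv γ t).1 := by
    intro t ht
    have := (ContinuousLinearMap.fst ℝ (EuclideanSpace ℝ (Fin m))
      (EuclideanSpace ℝ (Fin r))).hasFDerivAt.comp_hasDerivAt t (hγd t ht)
    exact this.deriv
  have hδA : ∀ t ∈ I, (δ t, deriv δ t) ∈ Ft.A := by
    intro t ht
    rw [hδd t ht]
    exact part1 t ht
  -- master identity
  have master : ∀ t ∈ I, ∀ b : EuclideanSpace ℝ (Fin m) × EuclideanSpace ℝ (Fin r),
      F.g (γ t, deriv γ t)
        (deriv (deriv γ) t + Γ (γ t, deriv γ t) (deriv γ t) (deriv γ t)) b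
      = Ft.g (δ t, deriv δ t)
          (deriv (deriv δ) t + Γt (δ t, deriv δ t) (deriv δ t) (deriv δ t)) b.1 := by
    intro t ht b
    have htotal := F.geodesic_g Γ hΓsymm hΓcompat hIopen hγ hγA ht b
    have hbase := Ft.geodesic_g Γt hΓtsymm hΓtcompat hIopen hδsm hδA ht b.1
    have hfun : ∀ t' ∈ I, fderiv ℝ F.L (γ t', deriv γ t') (0, b)
        = fderiv ℝ Ft.L (δ t', deriv δ t') ((0 : EuclideanSpace ℝ (Fin m)), b.1) := by
      intro t' ht'
      have hkey := submersion_fderiv F Ft hVnd hsub (hγA t' ht') (hγhor t' ht') 0 b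
      rw [hkey, hδd t' ht']
      simp [hδdef]
    have h1 : deriv (fun t' => fderiv ℝ F.L (γ t', deriv γ t') (0, b)) t
        = deriv (fun t' => fderiv ℝ Ft.L (δ t', deriv δ t') (0, b.1)) t := by
      apply Filter.EventuallyEq.deriv_eq
      filter_upwards [hIopen.mem_nhds ht] with s hs
      exact hfun s hs
    have h2 : fderiv ℝ F.L (γ t, deriv γ t) (b, 0)
        = fderiv ℝ Ft.L (δ t, deriv δ t) (b.1, 0) := by
      have hkey := submersion_fderiv F Ft hVnd hsub (hγA t ht) (hγhor t ht) b 0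
      rw [hkey, hδd t ht]
      simp [hδdef]
    rw [h1, h2] at htotal
    linarith [htotal, hbase]
  constructor
  · intro hgeo t ht
    apply Ft.g_nondeg _ (hδA t ht)
    intro h
    have hm := master t ht (h, 0)
    rw [hgeo t ht] at hm
    simp only [map_zero, LinearMap.zero_apply] at hm
    exact hm.symm
  · intro hbase t ht
    apply F.g_nondeg _ (hγA t ht)
    intro b
    have hY0 : deriv (deriv δ) t + Γt (δ t, deriv δ t) (deriv δ t) (deriv δ t) = 0 :=
      hbase t ht
    have hm := master t ht b
    rw [hY0] at hm
    simpa only [map_zero, LinearMap.zero_apply] using hm
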